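/- Let s, t, p be nonzero real numbers with 0 < s < t, and suppose p ≤ min(2s, (2/3)(s+t)), with the strict inequality p < 2s required in case t = 2s. Then for all positive real numbers a ≠ b, s/t < (M_s(a,b)^p − G(a,b)^p)/(M_t(a,b)^p − G(a,b)^p) < min(1, 2^{p/t − p/s}). -/

import Mathlib

/-!
Write `a = G e^u`, `b = G e^(-u)` with `G = √(ab)`, `u > 0`. Then
`M_r(a,b)^p = G^p cosh(ru)^(p/r)`, so the ratio is `N(u)/D(u)` with
`N(u) = cosh(su)^(p/s) - 1` and `D(u) = cosh(tu)^(p/t) - 1`, both vanishing at `0`.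
By a Cauchy mean value argument it suffices to bound `N'/D'`, that is
`sinh(su) cosh(su)^(p/s-1) / (sinh(tu) cosh(tu)^(p/t-1))`. Its logarithm tends to `log(s/t)` as
`u → 0` and to `(p/t - p/s) log 2` as `u → ∞`, and it is strictly increasing: with `X = 2su`,
`Y = 2tu`, `P = pu` this amounts to `P (sinh Y - sinh X - sinh (Y - X)) < X sinh Y - Y sinh X`,
which is where the restrictions on `p` enter. The bound by `1` is the strict power mean
inequality `M_s < M_t`, i.e. strict convexity of `x ↦ x^(t/s)`.
-/

/-- The power mean of order `r` of `a` and `b`. -/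
noncomputable def powerMean (r a b : ℝ) : ℝ := ((a ^ r + b ^ r) / 2) ^ (1 / r)

/-- The geometric mean of `a` and `b`. -/
noncomputable def geomMean (a b : ℝ) : ℝ := Real.sqrt (a * b)

open Real Set Filter Topology

lemma lt_of_hasDerivAt_pos {f f' : ℝ → ℝ} {a b : ℝ}
    (hf : ∀ x ∈ Icc a b, HasDerivAt f (f' x) x) (hf' : ∀ x ∈ Ioo a b, 0 < f' x)
    (hab : a < b) : f a < f b :=
  strictMonoOn_of_hasDerivWithinAt_pos (convex_Icc a b)
    (fun x hx => (hf x hx).continuousAt.continuousWithinAt)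
    (fun x hx => (hf x (interior_subset hx)).hasDerivWithinAt)
    (by simpa only [interior_Icc] using hf') (left_mem_Icc.2 hab.le) (right_mem_Icc.2 hab.le)
    hab

lemma le_of_hasDerivAt_nonneg {f f' : ℝ → ℝ} {a b : ℝ}
    (hf : ∀ x ∈ Icc a b, HasDerivAt f (f' x) x) (hf' : ∀ x ∈ Ioo a b, 0 ≤ f' x)
    (hab : a ≤ b) : f a ≤ f b :=
  monotoneOn_of_hasDerivWithinAt_nonneg (convex_Icc a b)
    (fun x hx => (hf x hx).continuousAt.continuousWithinAt)
    (fun x hx => (hf x (interior_subset hx)).hasDerivWithinAt)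
    (by simpa only [interior_Icc] using hf') (left_mem_Icc.2 hab) (right_mem_Icc.2 hab) hab

lemma lt_div_of_hasDerivAt_mul {F G φ ψ : ℝ → ℝ} {p c u : ℝ} (hp : p ≠ 0)
    (hF : ∀ x, HasDerivAt F (p * φ x) x) (hG : ∀ x, HasDerivAt G (p * ψ x) x)
    (hF0 : F 0 = 0) (hG0 : G 0 = 0) (hψ : ∀ x, 0 < x → 0 < ψ x)
    (hc : ∀ x, 0 < x → c * ψ x < φ x) (hu : 0 < u) : c < F u / G u := by
  have hpG : 0 < p * G u := by
    have := lt_of_hasDerivAt_pos (fun x _ => (hG x).const_mul p)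
      (fun x hx => by rw [← mul_assoc]; exact mul_pos (mul_self_pos.2 hp) (hψ x hx.1)) hu
    simpa [hG0] using this
  have hpH : 0 < p * (F u - c * G u) := by
    have := lt_of_hasDerivAt_pos (fun x _ => ((hF x).sub ((hG x).const_mul c)).const_mul p)
      (fun x hx => by
        rw [show p * (p * φ x - c * (p * ψ x)) = p * p * (φ x - c * ψ x) by ring]
        exact mul_pos (mul_self_pos.2 hp) (sub_pos.2 (hc x hx.1))) hu
    simpa [hF0, hG0] using this
  have hGu : G u ≠ 0 := right_ne_zero_of_mul hpG.ne'
  rw [← sub_pos, show F u / G u - c = p * (F u - c * G u) / (p * G u) by field_simp]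
  exact div_pos hpH hpG

lemma div_lt_of_hasDerivAt_mul {F G φ ψ : ℝ → ℝ} {p c u : ℝ} (hp : p ≠ 0)
    (hF : ∀ x, HasDerivAt F (p * φ x) x) (hG : ∀ x, HasDerivAt G (p * ψ x) x)
    (hF0 : F 0 = 0) (hG0 : G 0 = 0) (hψ : ∀ x, 0 < x → 0 < ψ x)
    (hc : ∀ x, 0 < x → φ x < c * ψ x) (hu : 0 < u) : F u / G u < c := by
  have := lt_div_of_hasDerivAt_mul (F := -F) (φ := -φ) (c := -c) hp
    (fun x => (hF x).neg.congr_deriv (by simp)) hG (by simp [hF0]) hG0 hψ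
    (fun x hx => by simpa using hc x hx) hu
  simpa [neg_div] using this

lemma StrictMonoOn.lt_of_tendsto_nhdsGT {f : ℝ → ℝ} {a l x : ℝ}
    (hf : StrictMonoOn f (Ioi a)) (hl : Tendsto f (𝓝[>] a) (𝓝 l)) (hx : a < x) : l < f x := by
  obtain ⟨y, hay, hyx⟩ := exists_between hx
  refine lt_of_le_of_lt (le_of_tendsto hl ?_) (hf hay hx hyx)
  filter_upwards [Ioo_mem_nhdsGT hay] with z hz
  exact (hf hz.1 hay hz.2).le

lemma StrictMonoOn.lt_of_tendsto_atTop {f : ℝ → ℝ} {a l x : ℝ} (hf : StrictMonoOn f (Ioi a))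
    (hl : Tendsto f atTop (𝓝 l)) (hx : a < x) : f x < l := by
  have hx1 : a < x + 1 := by linarith
  refine lt_of_lt_of_le (hf hx hx1 (by linarith)) (ge_of_tendsto hl ?_)
  filter_upwards [eventually_ge_atTop (x + 1)] with z hz
  exact hf.monotoneOn hx1 (hx1.trans_le hz) hz

lemma sinh_lt_mul_cosh {x : ℝ} (hx : 0 < x) : sinh x < x * cosh x := by
  have h := lt_of_hasDerivAt_pos (f := fun z => z * cosh z - sinh z) (f' := fun z => z * sinh z)
    (fun z _ => (((hasDerivAt_id' z).mul (hasDerivAt_cosh z)).sub (hasDerivAt_sinh z)).congr_deriv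
      (by ring))
    (fun z hz => mul_pos hz.1 (sinh_pos_iff.2 hz.1)) hx
  simp only [sinh_zero, zero_mul, sub_zero] at h
  linarith

lemma mul_sinh_lt_mul_sinh {x y : ℝ} (hx : 0 < x) (hxy : x < y) : y * sinh x < x * sinh y := by
  have h := lt_of_hasDerivAt_pos (f := fun z => x * sinh z - z * sinh x)
    (f' := fun z => x * cosh z - sinh x)
    (fun z _ => (((hasDerivAt_sinh z).const_mul x).sub
      ((hasDerivAt_id' z).mul_const (sinh x))).congr_deriv (by ring))
    (fun z hz => by
      have : cosh x ≤ cosh z := cosh_strictMonoOn.monotoneOn hx.le (hx.trans hz.1).le hz.1.le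
      nlinarith [sinh_lt_mul_cosh hx]) hxy
  simp only [sub_self] at h
  linarith

lemma mul_cosh_mul_sinh_le {x y : ℝ} (hx : 0 < x) (hxy : x ≤ y) :
    x * cosh x * sinh y ≤ y * cosh y * sinh x := by
  have hsinh {z : ℝ} (hz : z ∈ Icc x y) : 0 < sinh z := sinh_pos_iff.2 (hx.trans_le hz.1)
  have h := le_of_hasDerivAt_nonneg (f := fun z => z * cosh z / sinh z)
    (f' := fun z => (sinh z * cosh z - z) / sinh z ^ 2)
    (fun z hz => by
      refine (((hasDerivAt_id' z).mul (hasDerivAt_cosh z)).div (hasDerivAt_sinh z)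
        (hsinh hz).ne').congr_deriv ?_
      congr 1
      simp only [Pi.mul_apply]
      linear_combination (-z) * cosh_sq z)
    (fun z hz => by
      have hz0 : 0 < z := hx.trans hz.1
      have : z ≤ sinh z * cosh z := by
        nlinarith [self_le_sinh_iff.2 hz0.le, one_le_cosh z, sinh_pos_iff.2 hz0]
      exact div_nonneg (by linarith) (sq_nonneg _)) hxy
  rwa [div_le_div_iff₀ (hsinh ⟨le_rfl, hxy⟩) (hsinh ⟨hxy, le_rfl⟩)] at h

lemma three_mul_mul_sinh_two_mul_lt {d : ℝ} (hd : 0 < d) :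
    3 * d * sinh (2 * d) < 2 * sinh d * sinh (3 * d) := by
  have hS := sinh_pos_iff.2 hd
  have hdS : d < sinh d := self_lt_sinh_iff.2 hd
  have hC : cosh d ≤ 1 + sinh d ^ 2 := by nlinarith [cosh_sq d, one_le_cosh d]
  rw [sinh_two_mul, sinh_three_mul]
  nlinarith [mul_lt_mul_of_pos_right hdS (mul_pos hS (cosh_pos d)),
    mul_le_mul_of_nonneg_left hC hS.le, pow_pos hS 4]

lemma three_mul_mul_cosh_two_mul_lt {d : ℝ} (hd : 0 < d) :
    3 * d * cosh (2 * d) < cosh d * sinh (3 * d) := by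
  have h := lt_of_hasDerivAt_pos (f := fun z => cosh z * sinh (3 * z) - 3 * z * cosh (2 * z))
    (f' := fun z => 2 * (2 * sinh z * sinh (3 * z) - 3 * z * sinh (2 * z)))
    (fun z _ => by
      refine (((hasDerivAt_cosh z).mul ((hasDerivAt_id' z).const_mul 3).sinh).sub
        (((hasDerivAt_id' z).const_mul 3).mul
          ((hasDerivAt_id' z).const_mul 2).cosh)).congr_deriv ?_
      have : cosh (2 * z) = cosh (3 * z) * cosh z - sinh (3 * z) * sinh z := by
        rw [← cosh_sub]; ring_nf
      rw [this]; ring)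
    (fun z hz => by linarith [three_mul_mul_sinh_two_mul_lt hz.1]) hd
  simp only [cosh_zero, mul_zero, sinh_zero, zero_mul, sub_zero] at h
  linarith

lemma three_mul_mul_cosh_mul_sinh_le {d σ : ℝ} (hd : 0 < d) (hσ : 3 * d ≤ σ) :
    3 * d * cosh d * sinh σ ≤ sinh d * (2 * sinh σ + σ * cosh σ) := by
  have h3d : 0 < 3 * d := by linarith
  have hcosh : cosh d * sinh (3 * d) = sinh (2 * d) + sinh d * cosh (3 * d) := by
    rw [show 2 * d = 3 * d - d by ring, sinh_sub]; ring
  refine le_of_mul_le_mul_right ?_ (sinh_pos_iff.2 h3d)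
  calc 3 * d * cosh d * sinh σ * sinh (3 * d)
      = 3 * d * sinh (2 * d) * sinh σ + sinh d * (3 * d * cosh (3 * d) * sinh σ) := by
        linear_combination 3 * d * sinh σ * hcosh
    _ ≤ 2 * sinh d * sinh (3 * d) * sinh σ + sinh d * (σ * cosh σ * sinh (3 * d)) := by
        have := sinh_pos_iff.2 (h3d.trans_le hσ)
        have := sinh_pos_iff.2 hd
        gcongr ?_ * sinh σ + sinh d * ?_
        · exact (three_mul_mul_sinh_two_mul_lt hd).le
        · exact mul_cosh_mul_sinh_le h3d hσ
    _ = sinh d * (2 * sinh σ + σ * cosh σ) * sinh (3 * d) := by ring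

lemma three_mul_mul_cosh_mul_sinh_lt {d σ : ℝ} (hd : 0 < d) (hσ : 3 * d < σ) :
    3 * d * cosh d * sinh σ < σ * sinh d * (cosh σ + 2 * cosh d) := by
  -- The difference vanishes at `σ = 3d`, its derivative is positive there, and its second
  -- derivative is nonnegative beyond.
  set h' := fun x => sinh d * (cosh x + 2 * cosh d) + x * sinh d * sinh x - 3 * d * cosh d * cosh x
  have hh : ∀ x, HasDerivAt
      (fun x => x * sinh d * (cosh x + 2 * cosh d) - 3 * d * cosh d * sinh x) (h' x) x := fun x =>
    ((((hasDerivAt_id' x).mul_const (sinh d)).mul ((hasDerivAt_cosh x).add_const _)).sub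
      ((hasDerivAt_sinh x).const_mul _)).congr_deriv (by ring)
  have hh' : ∀ x,
      HasDerivAt h' (sinh d * (2 * sinh x + x * cosh x) - 3 * d * cosh d * sinh x) x := fun x =>
    (((((hasDerivAt_cosh x).add_const _).const_mul _).add
      (((hasDerivAt_id' x).mul_const (sinh d)).mul (hasDerivAt_sinh x))).sub
      ((hasDerivAt_cosh x).const_mul _)).congr_deriv (by ring)
  have hstart : sinh d * (cosh (3 * d) + 2 * cosh d) = cosh d * sinh (3 * d) := by
    rw [show 3 * d = 2 * d + d by ring, sinh_add, cosh_add, sinh_two_mul, cosh_two_mul]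
    linear_combination (-2 * sinh d * cosh d) * cosh_sq d
  have hh'_start : 0 < h' (3 * d) := by
    have hcosh : cosh (2 * d) = cosh (3 * d) * cosh d - sinh (3 * d) * sinh d := by
      rw [← cosh_sub]; ring_nf
    have : h' (3 * d) = cosh d * sinh (3 * d) - 3 * d * cosh (2 * d) := by
      simp only [h']
      linear_combination hstart + 3 * d * hcosh
    linarith [three_mul_mul_cosh_two_mul_lt hd]
  have hh'_pos : ∀ x ∈ Ioo (3 * d) σ, 0 < h' x := fun x hx =>
    hh'_start.trans_le <| le_of_hasDerivAt_nonneg (fun y _ => hh' y)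
      (fun y hy => sub_nonneg.2 (three_mul_mul_cosh_mul_sinh_le hd hy.1.le)) hx.1.le
  have := lt_of_hasDerivAt_pos (fun x _ => hh x) hh'_pos hσ
  linear_combination this - 3 * d * hstart

lemma mul_sinh_sub_sinh_sub_sinh_lt {X Y P : ℝ} (hX : 0 < X) (hXY : X < Y) (hPX : P ≤ X)
    (hPXY : 3 * P ≤ X + Y) (hexc : Y = 2 * X → P < X) :
    P * (sinh Y - sinh X - sinh (Y - X)) < X * sinh Y - Y * sinh X := by
  -- The left side grows with `P`: the binding constraint is `3P ≤ X + Y` if `Y < 2X`,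
  -- and `P ≤ X` otherwise.
  have hgap : 0 < sinh Y - sinh X - sinh (Y - X) := by
    have hsplit : sinh Y - sinh X - sinh (Y - X)
        = sinh (Y - X) * (cosh X - 1) + sinh X * (cosh (Y - X) - 1) := by
      rw [show Y = (Y - X) + X by ring, sinh_add]; ring_nf
    rw [hsplit]
    have := one_lt_cosh.2 hX.ne'
    have := one_lt_cosh.2 (sub_pos.2 hXY).ne'
    have := sinh_pos_iff.2 hX
    have := sinh_pos_iff.2 (sub_pos.2 hXY)
    positivity
  rcases lt_trichotomy Y (2 * X) with hY | hY | hY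
  · obtain ⟨σ, d, rfl, rfl⟩ : ∃ σ d, X = σ - d ∧ Y = σ + d :=
      ⟨(X + Y) / 2, (Y - X) / 2, by ring, by ring⟩
    have := three_mul_mul_cosh_mul_sinh_lt (d := d) (σ := σ) (by linarith) (by linarith)
    have hmid := mul_le_mul_of_nonneg_right (show 3 * P ≤ 2 * σ by linarith) hgap.le
    rw [show σ + d - (σ - d) = 2 * d by ring, sinh_add, sinh_sub, sinh_two_mul] at hmid ⊢
    nlinarith
  · have hYX : sinh (Y - X) = sinh X := by rw [hY]; ring_nf
    calc P * (sinh Y - sinh X - sinh (Y - X)) < X * (sinh Y - sinh X - sinh (Y - X)) :=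
          mul_lt_mul_of_pos_right (hexc hY) hgap
      _ = X * sinh Y - Y * sinh X := by rw [hYX, hY]; ring
  · have := mul_sinh_lt_mul_sinh hX (show X < Y - X by linarith)
    calc P * (sinh Y - sinh X - sinh (Y - X)) ≤ X * (sinh Y - sinh X - sinh (Y - X)) :=
          mul_le_mul_of_nonneg_right hPX hgap.le
      _ < X * sinh Y - Y * sinh X := by linarith

lemma tendsto_log_sub_self_of_tendsto_mul_exp_neg {f : ℝ → ℝ} {c : ℝ} (hc : 0 < c)
    (hf : Tendsto (fun x => f x * exp (-x)) atTop (𝓝 c)) :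
    Tendsto (fun x => log (f x) - x) atTop (𝓝 (log c)) := by
  refine ((continuousAt_log hc.ne').tendsto.comp hf).congr' ?_
  filter_upwards [hf.eventually (lt_mem_nhds hc)] with x hx
  have hfx : f x ≠ 0 := left_ne_zero_of_mul (ne_of_gt hx)
  simp [log_mul hfx (exp_pos _).ne', sub_eq_add_neg]

lemma tendsto_log_cosh_sub_self : Tendsto (fun x => log (cosh x) - x) atTop (𝓝 (-log 2)) := by
  rw [← log_inv, ← one_div]
  refine tendsto_log_sub_self_of_tendsto_mul_exp_neg one_half_pos ?_
  have h := ((tendsto_exp_neg_atTop_nhds_zero.pow 2).const_add 1).div_const 2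
  norm_num at h
  refine h.congr fun x => ?_
  rw [cosh_eq, exp_neg]
  field_simp

lemma tendsto_log_sinh_sub_self : Tendsto (fun x => log (sinh x) - x) atTop (𝓝 (-log 2)) := by
  rw [← log_inv, ← one_div]
  refine tendsto_log_sub_self_of_tendsto_mul_exp_neg one_half_pos ?_
  have h := ((tendsto_exp_neg_atTop_nhds_zero.pow 2).const_sub 1).div_const 2
  norm_num at h
  refine h.congr fun x => ?_
  rw [sinh_eq, exp_neg]
  field_simp

lemma tendsto_sinh_mul_div_nhdsGT (r : ℝ) :
    Tendsto (fun u => sinh (r * u) / u) (𝓝[>] 0) (𝓝 r) := by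
  have h := (((hasDerivAt_id' (0 : ℝ)).const_mul r).sinh).tendsto_slope_zero_right
  simp only [mul_zero, cosh_zero, mul_one, one_mul, zero_add, sinh_zero, sub_zero,
    smul_eq_mul] at h
  exact h.congr fun u => inv_mul_eq_div _ _

noncomputable def coshSlope (r p u : ℝ) : ℝ := sinh (r * u) * cosh (r * u) ^ (p / r - 1)

noncomputable def logCoshSlope (r p u : ℝ) : ℝ :=
  log (sinh (r * u)) + (p / r - 1) * log (cosh (r * u))

lemma hasDerivAt_cosh_mul_rpow {r : ℝ} (hr : r ≠ 0) (p u : ℝ) :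
    HasDerivAt (fun u => cosh (r * u) ^ (p / r)) (p * coshSlope r p u) u :=
  (((hasDerivAt_id' u).const_mul r).cosh.rpow_const (Or.inl (cosh_pos _).ne')).congr_deriv <| by
    rw [coshSlope]; field_simp

lemma coshSlope_pos {r p u : ℝ} (hr : 0 < r) (hu : 0 < u) : 0 < coshSlope r p u :=
  mul_pos (sinh_pos_iff.2 (mul_pos hr hu)) (rpow_pos_of_pos (cosh_pos _) _)

lemma exp_logCoshSlope {r p u : ℝ} (hr : 0 < r) (hu : 0 < u) :
    exp (logCoshSlope r p u) = coshSlope r p u := by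
  rw [logCoshSlope, exp_add, exp_log (sinh_pos_iff.2 (mul_pos hr hu)), coshSlope,
    rpow_def_of_pos (cosh_pos _), mul_comm (p / r - 1)]

lemma hasDerivAt_logCoshSlope {r p u : ℝ} (hr : 0 < r) (hu : 0 < u) :
    HasDerivAt (logCoshSlope r p)
      ((r + p * sinh (r * u) ^ 2) / (sinh (r * u) * cosh (r * u))) u := by
  have hsinh := (sinh_pos_iff.2 (mul_pos hr hu)).ne'
  have hlin := (hasDerivAt_id' u).const_mul r
  refine ((hlin.sinh.log hsinh).add
    ((hlin.cosh.log (cosh_pos _).ne').const_mul _)).congr_deriv ?_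
  field_simp
  linear_combination r * cosh_sq (r * u)

lemma tendsto_logCoshSlope_sub_log {r : ℝ} (hr : 0 < r) (p : ℝ) :
    Tendsto (fun u => logCoshSlope r p u - log u) (𝓝[>] 0) (𝓝 (log r)) := by
  have hsinh := ((continuousAt_log hr.ne').tendsto.comp (tendsto_sinh_mul_div_nhdsGT r))
  have hcosh : Tendsto (fun u => log (cosh (r * u))) (𝓝[>] 0) (𝓝 0) := by
    have : ContinuousAt (fun u => log (cosh (r * u))) 0 := by fun_prop (disch := positivity)
    simpa using this.tendsto.mono_left nhdsWithin_le_nhds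
  have h := hsinh.add (hcosh.const_mul (p / r - 1))
  rw [mul_zero, add_zero] at h
  refine h.congr' ?_
  filter_upwards [self_mem_nhdsWithin] with u (hu : 0 < u)
  simp only [Function.comp_apply, logCoshSlope]
  rw [log_div (sinh_pos_iff.2 (mul_pos hr hu)).ne' hu.ne']
  ring

lemma tendsto_logCoshSlope_sub_mul {r : ℝ} (hr : 0 < r) (p : ℝ) :
    Tendsto (fun u => logCoshSlope r p u - p * u) atTop (𝓝 (-(p / r * log 2))) := by
  have hru : Tendsto (fun u => r * u) atTop atTop := tendsto_id.const_mul_atTop hr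
  have h := (tendsto_log_sinh_sub_self.comp hru).add
    ((tendsto_log_cosh_sub_self.comp hru).const_mul (p / r - 1))
  convert h using 2 with u
  · simp only [Function.comp_apply, logCoshSlope]
    field_simp
    ring
  · ring

lemma cosh_mul_rpow_div_lt {s t u : ℝ} (h0s : 0 < s) (hst : s < t) (hu : u ≠ 0) :
    cosh (s * u) ^ (t / s) < cosh (t * u) := by
  have hne : exp (s * u) ≠ exp (-(s * u)) :=
    exp_injective.ne (by simpa [eq_neg_iff_add_eq_zero, ← two_mul] using mul_ne_zero h0s.ne' hu)
  have h := (strictConvexOn_rpow ((one_lt_div h0s).2 hst)).2 (exp_pos _).le (exp_pos _).le hne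
    one_half_pos one_half_pos (add_halves 1)
  simp only [smul_eq_mul, ← exp_mul] at h
  have hexp : s * u * (t / s) = t * u := by field_simp
  rw [hexp, neg_mul, hexp] at h
  have hcosh (x : ℝ) : cosh x = 1 / 2 * exp x + 1 / 2 * exp (-x) := by rw [cosh_eq]; ring
  rwa [hcosh, hcosh]

lemma rpow_sub_one_div_rpow_sub_one_lt_one {x y q : ℝ} (hx : 1 < x) (hxy : x < y) (hq : q ≠ 0) :
    (x ^ q - 1) / (y ^ q - 1) < 1 := by
  rcases hq.lt_or_gt with hq | hq
  · have := rpow_lt_rpow_of_neg (by linarith) hxy hq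
    have := rpow_lt_one_of_one_lt_of_neg hx hq
    rw [div_lt_one_of_neg (by linarith)]
    linarith
  · have := rpow_lt_rpow (by linarith) hxy hq
    have := one_lt_rpow hx hq
    rw [div_lt_one (by linarith)]
    linarith

lemma cosh_rpow_ratio_lt_one {s t p u : ℝ} (h0s : 0 < s) (hst : s < t) (hp : p ≠ 0)
    (hu : u ≠ 0) :
    (cosh (s * u) ^ (p / s) - 1) / (cosh (t * u) ^ (p / t) - 1) < 1 := by
  have h0t := h0s.trans hst
  rw [show p / s = t / s * (p / t) by field_simp, rpow_mul (cosh_pos _).le]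
  exact rpow_sub_one_div_rpow_sub_one_lt_one
    (one_lt_rpow (one_lt_cosh.2 (mul_ne_zero h0s.ne' hu)) (div_pos h0t h0s))
    (cosh_mul_rpow_div_lt h0s hst hu) (div_ne_zero hp h0t.ne')

section RatioBounds

variable {s t p : ℝ} (h0s : 0 < s) (hst : s < t) (hp2s : p ≤ 2 * s)
  (hpst : p ≤ 2 / 3 * (s + t)) (hexc : t = 2 * s → p < 2 * s)
include h0s hst hp2s hpst hexc

lemma logCoshSlope_deriv_lt {u : ℝ} (hu : 0 < u) :
    (t + p * sinh (t * u) ^ 2) / (sinh (t * u) * cosh (t * u))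
      < (s + p * sinh (s * u) ^ 2) / (sinh (s * u) * cosh (s * u)) := by
  have h0t := h0s.trans hst
  have hsu := sinh_pos_iff.2 (mul_pos h0s hu)
  have htu := sinh_pos_iff.2 (mul_pos h0t hu)
  have key := mul_sinh_sub_sinh_sub_sinh_lt (X := 2 * (s * u)) (Y := 2 * (t * u)) (P := p * u)
    (by positivity) (by nlinarith) (by nlinarith) (by nlinarith)
    (fun h => by nlinarith [hexc (mul_right_cancel₀ hu.ne' (by linarith : t * u = 2 * s * u))])
  have hid : 2 * (s * u) * sinh (2 * (t * u)) - 2 * (t * u) * sinh (2 * (s * u))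
      - p * u * (sinh (2 * (t * u)) - sinh (2 * (s * u)) - sinh (2 * (t * u) - 2 * (s * u)))
      = 4 * u * ((s + p * sinh (s * u) ^ 2) * (sinh (t * u) * cosh (t * u))
        - (t + p * sinh (t * u) ^ 2) * (sinh (s * u) * cosh (s * u))) := by
    rw [sinh_sub, sinh_two_mul, sinh_two_mul, cosh_two_mul, cosh_two_mul, cosh_sq (s * u),
      cosh_sq (t * u)]
    ring
  rw [div_lt_div_iff₀ (by positivity) (by positivity)]
  nlinarith

lemma strictMonoOn_logCoshSlope_sub :
    StrictMonoOn (fun u => logCoshSlope s p u - logCoshSlope t p u) (Ioi 0) := by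
  have h0t := h0s.trans hst
  have hderiv (u : ℝ) (hu : 0 < u) := (hasDerivAt_logCoshSlope (p := p) h0s hu).sub
    (hasDerivAt_logCoshSlope (p := p) h0t hu)
  refine strictMonoOn_of_hasDerivWithinAt_pos (convex_Ioi 0)
    (f' := fun u => (s + p * sinh (s * u) ^ 2) / (sinh (s * u) * cosh (s * u))
      - (t + p * sinh (t * u) ^ 2) / (sinh (t * u) * cosh (t * u)))
    (fun u hu => (hderiv u hu).continuousAt.continuousWithinAt) (fun u hu => ?_) (fun u hu => ?_)
  · rw [interior_Ioi] at hu ⊢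
    exact (hderiv u hu).hasDerivWithinAt
  · rw [interior_Ioi] at hu
    exact sub_pos.2 (logCoshSlope_deriv_lt h0s hst hp2s hpst hexc hu)

lemma coshSlope_div_bounds {u : ℝ} (hu : 0 < u) :
    s / t < coshSlope s p u / coshSlope t p u ∧
      coshSlope s p u / coshSlope t p u < 2 ^ (p / t - p / s) := by
  have h0t := h0s.trans hst
  have hmono := strictMonoOn_logCoshSlope_sub h0s hst hp2s hpst hexc
  have hlow := hmono.lt_of_tendsto_nhdsGT
    (((tendsto_logCoshSlope_sub_log h0s p).sub (tendsto_logCoshSlope_sub_log h0t p)).congr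
      fun v => by ring) hu
  have hhigh := hmono.lt_of_tendsto_atTop
    (((tendsto_logCoshSlope_sub_mul h0s p).sub (tendsto_logCoshSlope_sub_mul h0t p)).congr
      fun v => by ring) hu
  rw [← exp_logCoshSlope h0s hu, ← exp_logCoshSlope h0t hu, ← exp_sub,
    rpow_def_of_pos two_pos, ← exp_log (div_pos h0s h0t), log_div h0s.ne' h0t.ne']
  constructor
  · exact exp_lt_exp.2 hlow
  · exact exp_lt_exp.2 (by linarith)

lemma div_lt_cosh_rpow_ratio (hp : p ≠ 0) {u : ℝ} (hu : 0 < u) :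
    s / t < (cosh (s * u) ^ (p / s) - 1) / (cosh (t * u) ^ (p / t) - 1) := by
  have h0t := h0s.trans hst
  refine lt_div_of_hasDerivAt_mul (F := fun x => cosh (s * x) ^ (p / s) - 1)
    (G := fun x => cosh (t * x) ^ (p / t) - 1) hp
    (fun x => (hasDerivAt_cosh_mul_rpow h0s.ne' p x).sub_const 1)
    (fun x => (hasDerivAt_cosh_mul_rpow h0t.ne' p x).sub_const 1) (by simp) (by simp)
    (fun x => coshSlope_pos h0t) (fun x hx => ?_) hu
  exact (lt_div_iff₀ (coshSlope_pos h0t hx)).1 (coshSlope_div_bounds h0s hst hp2s hpst hexc hx).1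

lemma cosh_rpow_ratio_lt_two_rpow (hp : p ≠ 0) {u : ℝ} (hu : 0 < u) :
    (cosh (s * u) ^ (p / s) - 1) / (cosh (t * u) ^ (p / t) - 1) < 2 ^ (p / t - p / s) := by
  have h0t := h0s.trans hst
  refine div_lt_of_hasDerivAt_mul (F := fun x => cosh (s * x) ^ (p / s) - 1)
    (G := fun x => cosh (t * x) ^ (p / t) - 1) hp
    (fun x => (hasDerivAt_cosh_mul_rpow h0s.ne' p x).sub_const 1)
    (fun x => (hasDerivAt_cosh_mul_rpow h0t.ne' p x).sub_const 1) (by simp) (by simp)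
    (fun x => coshSlope_pos h0t) (fun x hx => ?_) hu
  exact (div_lt_iff₀ (coshSlope_pos h0t hx)).1 (coshSlope_div_bounds h0s hst hp2s hpst hexc hx).2

end RatioBounds

lemma powerMean_eq_geomMean_mul {r a b : ℝ} (ha : 0 < a) (hb : 0 < b) (hr : r ≠ 0) :
    powerMean r a b = geomMean a b * cosh (r * (|log a - log b| / 2)) ^ (1 / r) := by
  have hG : 0 < geomMean a b := sqrt_pos.2 (mul_pos ha hb)
  have hlogG : log (geomMean a b) = (log a + log b) / 2 := by
    rw [geomMean, log_sqrt (mul_pos ha hb).le, log_mul ha.ne' hb.ne']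
  have hcosh : cosh (r * (|log a - log b| / 2)) = cosh (r * ((log a - log b) / 2)) := by
    rcases abs_choice (log a - log b) with h | h <;> rw [h]
    rw [← cosh_neg]; ring_nf
  have hsum : a ^ r + b ^ r = 2 * (geomMean a b ^ r * cosh (r * ((log a - log b) / 2))) := by
    rw [rpow_def_of_pos ha, rpow_def_of_pos hb, rpow_def_of_pos hG, hlogG, cosh_eq,
      show log a * r = (log a + log b) / 2 * r + r * ((log a - log b) / 2) by ring,
      show log b * r = (log a + log b) / 2 * r + -(r * ((log a - log b) / 2)) by ring,
      exp_add, exp_add]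
    ring
  rw [powerMean, hcosh, hsum, mul_div_cancel_left₀ _ two_ne_zero,
    mul_rpow (rpow_pos_of_pos hG r).le (cosh_pos _).le, ← rpow_mul hG.le, mul_one_div_cancel hr,
    rpow_one]

lemma powerMean_rpow_sub_geomMean_rpow {r a b : ℝ} (ha : 0 < a) (hb : 0 < b) (hr : r ≠ 0)
    (p : ℝ) :
    powerMean r a b ^ p - geomMean a b ^ p
      = geomMean a b ^ p * (cosh (r * (|log a - log b| / 2)) ^ (p / r) - 1) := by
  have hG : 0 ≤ geomMean a b := sqrt_nonneg _
  rw [powerMean_eq_geomMean_mul ha hb hr, mul_rpow hG (rpow_nonneg (cosh_pos _).le _),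
    ← rpow_mul (cosh_pos _).le, one_div_mul_eq_div, mul_sub_one]

theorem ratio_bounds_pos_small_p_general (s t p : ℝ) (hp : p ≠ 0)
    (h0s : 0 < s) (hst : s < t)
    (hple : p ≤ min (2 * s) (2 / 3 * (s + t)))
    (hexc : t = 2 * s → p < 2 * s) :
    ∀ a b : ℝ, 0 < a → 0 < b → a ≠ b →
      s / t <
        (powerMean s a b ^ p - geomMean a b ^ p) /
          (powerMean t a b ^ p - geomMean a b ^ p) ∧
      (powerMean s a b ^ p - geomMean a b ^ p) /
          (powerMean t a b ^ p - geomMean a b ^ p) <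
        min 1 ((2 : ℝ) ^ (p / t - p / s)) := by
  intro a b ha hb hab
  obtain ⟨hp2s, hpst⟩ := le_min_iff.1 hple
  have hu : 0 < |log a - log b| / 2 :=
    half_pos (abs_pos.2 (sub_ne_zero.2 fun h => hab (log_injOn_pos ha hb h)))
  have hG : geomMean a b ^ p ≠ 0 := (rpow_pos_of_pos (sqrt_pos.2 (mul_pos ha hb)) p).ne'
  rw [powerMean_rpow_sub_geomMean_rpow ha hb h0s.ne', powerMean_rpow_sub_geomMean_rpow ha hb
    (h0s.trans hst).ne', mul_div_mul_left _ _ hG]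
  exact ⟨div_lt_cosh_rpow_ratio h0s hst hp2s hpst hexc hp hu,
    lt_min (cosh_rpow_ratio_lt_one h0s hst hp hu.ne')
      (cosh_rpow_ratio_lt_two_rpow h0s hst hp2s hpst hexc hp hu)⟩

/-- Theorem 3.1(a), second part. -/
theorem ratio_bounds_pos_small_p (s t p : ℝ) (hs : s ≠ 0) (ht : t ≠ 0) (hp : p ≠ 0)
    (h0s : 0 < s) (hst : s < t)
    (hple : p ≤ min (2 * s) (2 / 3 * (s + t)))
    (hexc : t = 2 * s → p < 2 * s) :
    ∀ a b : ℝ, 0 < a → 0 < b → a ≠ b →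
      s / t <
        (powerMean s a b ^ p - geomMean a b ^ p) /
          (powerMean t a b ^ p - geomMean a b ^ p) ∧
      (powerMean s a b ^ p - geomMean a b ^ p) /
          (powerMean t a b ^ p - geomMean a b ^ p) <
        min 1 ((2 : ℝ) ^ (p / t - p / s)) :=
  ratio_bounds_pos_small_p_general s t p hp h0s hst hple hexc
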